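/- arXiv:1309.3690 — 3 statements merged into one kernel-verified Lean document; each statement's English description precedes it below -/
import Mathlib

section
/- For independent uniform samples from [n] with n ≥ 4, the number X of samples until the first duplicate satisfies E[X²] ≤ 4n. -/
/-!
Write `X` for `firstDup n`. Layer-cake summation gives `E[X²] = ∑ⱼ (2j + 1) P(X > j)`, and
`X > j` means that the first `j` samples are distinct, so `P(X > j) = n(n-1)⋯(n-j+1) / nʲ`.
Since `n P(X > j + 1) = (n - j) P(X > j)`, the terms `j P(X > j)` telescope to
`n (P(X > 0) - P(X > n + 1)) = n`, giving the exact identity `E[X²] = 2n + E[X] ≤ 3n + 1`,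
which is at most `4n` once `n ≥ 1`.
For `n = 0` there are no sample sequences and the quotient is `0 / 0 = 0`.
-/

/-- The number of samples drawn until the first duplicate occurs. -/
noncomputable def firstDup (n : ℕ) (u : Fin (n + 1) → Fin n) : ℕ :=
  sInf {m : ℕ | ∃ i j : Fin (n + 1), (i : ℕ) < j ∧ (j : ℕ) < m ∧ u i = u j}

open Finset

theorem Finset.sum_sum_range_eq_sum_card_smul {α M : Type*} [Fintype α] [AddCommMonoid M]
    (f : α → ℕ) {K : ℕ} (hf : ∀ a, f a ≤ K) (g : ℕ → M) :
    ∑ a, ∑ j ∈ range (f a), g j = ∑ j ∈ range K, #{a | j < f a} • g j := by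
  have hrange (a : α) : range (f a) = {j ∈ range K | j < f a} := by
    ext j; simp only [mem_range, mem_filter]; have := hf a; omega
  simp_rw [hrange, sum_filter]
  rw [sum_comm]
  simp_rw [← sum_filter, sum_const]

theorem Finset.sum_range_two_mul_add_one (m : ℕ) : ∑ j ∈ range m, (2 * j + 1) = m ^ 2 := by
  induction m with
  | zero => simp
  | succ k ih => rw [sum_range_succ, ih]; ring

theorem Fintype.card_injective_restrict {α β : Type*} [Fintype α] [DecidableEq α] [Fintype β]
    [DecidableEq β] (p : α → Prop) [DecidablePred p] :
    card {f : α → β // Function.Injective fun a : {a // p a} ↦ f a} =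
      (card β).descFactorial (card {a // p a}) * card β ^ card {a // ¬p a} := by
  let e := (Equiv.piEquivPiSubtypeProd p fun _ ↦ β).subtypeEquiv
    (p := fun f ↦ Function.Injective fun a : {a // p a} ↦ f a)
    (q := fun g ↦ Function.Injective g.1) fun _ ↦ Iff.rfl
  rw [card_congr (e.trans Equiv.prodSubtypeFstEquivSubtypeProd), card_prod,
    card_congr (Equiv.subtypeInjectiveEquivEmbedding _ _), card_embedding_eq, card_fun]

theorem Nat.lt_sInf_iff_notMem {S : Set ℕ} (hS : S.Nonempty) (hS' : IsUpperSet S) (j : ℕ) :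
    j < sInf S ↔ j ∉ S :=
  ⟨fun h hj ↦ (Nat.sInf_le hj).not_gt h,
    fun hj ↦ not_le.mp fun h ↦ hj (hS' h (Nat.sInf_mem hS))⟩

theorem Fintype.exists_lt_map_eq_of_card_lt {α β : Type*} [LinearOrder α] [Fintype α]
    [Fintype β] (f : α → β) (h : card β < card α) : ∃ a b, a < b ∧ f a = f b := by
  by_contra! hne
  exact (card_le_of_injective f (.of_lt_imp_ne hne)).not_gt h

section firstDup

variable {n : ℕ} (u : Fin (n + 1) → Fin n)

theorem firstDup_le : firstDup n u ≤ n + 1 :=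
  let ⟨i, i', hlt, he⟩ := Fintype.exists_lt_map_eq_of_card_lt u (by simp)
  Nat.sInf_le ⟨i, i', hlt, i'.isLt, he⟩

theorem lt_firstDup_iff (j : ℕ) :
    j < firstDup n u ↔ Function.Injective fun i : {i : Fin (n + 1) // (i : ℕ) < j} ↦ u i := by
  have hS : IsUpperSet {m : ℕ | ∃ i j : Fin (n + 1), (i : ℕ) < j ∧ (j : ℕ) < m ∧ u i = u j} :=
    fun a b hab ⟨i, i', hi, hi', he⟩ ↦ ⟨i, i', hi, hi'.trans_le hab, he⟩
  obtain ⟨i, i', hlt, he⟩ := Fintype.exists_lt_map_eq_of_card_lt u (by simp)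
  rw [firstDup, Nat.lt_sInf_iff_notMem ⟨n + 1, Set.mem_ofPred.mpr ⟨i, i', hlt, i'.isLt, he⟩⟩ hS,
    Set.mem_ofPred_eq]
  constructor
  · intro h
    exact .of_lt_imp_ne fun a b hab he ↦ h ⟨a, b, hab, b.2, he⟩
  · rintro hinj ⟨a, b, hab, hb, he⟩
    exact hab.ne <| congrArg (fun x ↦ (x.1 : ℕ)) <|
      hinj (a₁ := ⟨a, hab.trans hb⟩) (a₂ := ⟨b, hb⟩) he

theorem card_lt_firstDup {j : ℕ} (hj : j ≤ n + 1) :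
    #{u : Fin (n + 1) → Fin n | j < firstDup n u} = n.descFactorial j * n ^ (n + 1 - j) := by
  simp_rw [lt_firstDup_iff, ← Fintype.card_subtype, Fintype.card_injective_restrict,
    Fintype.card_subtype_compl, Fintype.card_subtype, Fin.card_filter_val_lt, Fintype.card_fin,
    min_eq_right hj]

theorem sum_range_mul_descFactorial_mul_pow {m : ℕ} (hm : m ≤ n + 1) :
    ∑ j ∈ range m, j * (n.descFactorial j * n ^ (n + 1 - j)) +
      n * (n.descFactorial m * n ^ (n + 1 - m)) = n ^ (n + 2) := by
  induction m with
  | zero => rw [Nat.descFactorial_zero, Nat.sub_zero]; ring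
  | succ m ih =>
    rw [sum_range_succ, ← ih (by omega), Nat.descFactorial_succ,
      show n + 1 - m = n + 1 - (m + 1) + 1 by omega]
    obtain ⟨k, rfl⟩ := Nat.exists_eq_add_of_le (show m ≤ n by omega)
    rw [Nat.add_sub_cancel_left]
    ring

theorem sum_firstDup_le : ∑ u : Fin (n + 1) → Fin n, firstDup n u ≤ (n + 1) * n ^ (n + 1) :=
  (sum_le_card_nsmul _ _ _ fun u _ ↦ firstDup_le u).trans_eq (by simp [mul_comm])

theorem sum_firstDup_sq :
    ∑ u : Fin (n + 1) → Fin n, firstDup n u ^ 2 = 2 * n ^ (n + 2) + ∑ u, firstDup n u := by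
  have hsq := sum_sum_range_eq_sum_card_smul (firstDup n) firstDup_le fun j ↦ 2 * j + 1
  have hid := sum_sum_range_eq_sum_card_smul (firstDup n) firstDup_le fun _ ↦ 1
  simp only [sum_range_two_mul_add_one, sum_const, card_range, smul_eq_mul, mul_one] at hsq hid
  rw [hsq, hid, ← sum_range_mul_descFactorial_mul_pow le_rfl,
    Nat.descFactorial_of_lt n.lt_succ_self, zero_mul, mul_zero, add_zero, mul_sum,
    ← sum_add_distrib]
  refine sum_congr rfl fun j hj ↦ ?_
  rw [card_lt_firstDup (mem_range.mp hj).le]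
  ring

theorem stmt2_general (n : ℕ) :
    (∑ u : Fin (n + 1) → Fin n, ((firstDup n u : ℝ) ^ 2)) /
        (Fintype.card (Fin (n + 1) → Fin n) : ℝ) ≤ 4 * n := by
  have key : ∑ u : Fin (n + 1) → Fin n, firstDup n u ^ 2 ≤ 4 * n * n ^ (n + 1) := by
    have hpow : n ^ (n + 1) ≤ n * n ^ (n + 1) := calc
      n ^ (n + 1) = n * n ^ n := pow_succ' n n
      _ ≤ n * n * n ^ n := Nat.mul_le_mul_right _ (Nat.le_mul_self n)
      _ = n * n ^ (n + 1) := by ring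
    rw [sum_firstDup_sq, pow_succ' n (n + 1)]
    linarith [sum_firstDup_le (n := n)]
  rw [Fintype.card_fun, Fintype.card_fin, Fintype.card_fin]
  refine div_le_of_le_mul₀ (by positivity) (by positivity) ?_
  exact_mod_cast key

/-- For i.u.d. samples from `[n]` with `n ≥ 4`, the number `X` of samples until the
first duplicate satisfies `E[X²] ≤ 4n`. -/
theorem stmt2 (n : ℕ) (hn : 4 ≤ n) :
    (∑ u : Fin (n + 1) → Fin n, ((firstDup n u : ℝ) ^ 2)) /
        (Fintype.card (Fin (n + 1) → Fin n) : ℝ) ≤ 4 * n :=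
  stmt2_general n
end firstDup
end

section
/- Let x ∈ [n+m-1]-indexed input with 1 ≤ m < n and assume the middle segment x_m,...,x_n is all-distinct. Define i_L = max{j ∈ [m-1] : (x_j,...,x_n) has a duplicate} (0 if none) and i_R = min{j ∈ [m-1] : (x_m,...,x_{n+j}) has a duplicate} (m if none). Then for each window index w ∈ [m], the window (x_w,...,x_{w+n-1}) is all-distinct if and only if w > i_L, w ≤ i_R, and the w-th window of length m-1 of the concatenation (x₁,...,x_{m-1}, x_{n+1},...,x_{n+m-1}) is all-distinct. -/
/-!
Split the window `[w, w + n - 1]` into the left part `[w, m - 1]`, the middle `[m, n]` and the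
right part `[n + 1, w + n - 1]`. A function is injective on a union of three sets as soon as it is
injective on the union of any two of them, since every pair of points lies in such a union. The
left part together with the middle is `[w, n]`, which is duplicate-free exactly when `w > i_L`
(the sets `[j, n]` shrink as `j` grows); the middle together with the right part is
`[m, n + w - 1]`, which is duplicate-free exactly when `w ≤ i_R`; and the left part together with
the right part is, after reindexing, the `w`-th window of the concatenation.
-/

open Set

lemma injOn_union_union_iff {α β : Type*} {f : α → β} {A B C : Set α} :
    InjOn f (A ∪ B ∪ C) ↔ InjOn f (A ∪ B) ∧ InjOn f (B ∪ C) ∧ InjOn f (A ∪ C) := by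
  refine ⟨fun h => ⟨h.mono (by grind), h.mono (by grind), h.mono (by grind)⟩, ?_⟩
  rintro ⟨hAB, hBC, hAC⟩ a ha b hb
  rcases ha with (ha | ha) | ha <;> rcases hb with (hb | hb) | hb <;>
    first
    | (apply hAB <;> simp only [mem_union] <;> tauto)
    | (apply hBC <;> simp only [mem_union] <;> tauto)
    | (apply hAC <;> simp only [mem_union] <;> tauto)

lemma sSup_not_lt_iff_of_monotone {Q : ℕ → Prop} (hQ : Monotone Q) {m w : ℕ} (hm : Q m)
    (hw1 : 1 ≤ w) (hwm : w ≤ m) :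
    sSup {j | j ∈ Icc 1 (m - 1) ∧ ¬ Q j} < w ↔ Q w := by
  set S := {j | j ∈ Icc 1 (m - 1) ∧ ¬ Q j}
  have hS : BddAbove S := ⟨m - 1, fun j hj => hj.1.2⟩
  constructor
  · intro hlt
    by_contra hw
    have hwm' : w < m := lt_of_le_of_ne hwm (by rintro rfl; exact hw hm)
    have hwS : w ∈ S := ⟨⟨hw1, by omega⟩, hw⟩
    exact (le_csSup hS hwS).not_gt hlt
  · intro hw
    rcases S.eq_empty_or_nonempty with hS0 | hSne
    · rw [hS0, csSup_empty]
      exact hw1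
    · by_contra! hle
      exact (Nat.sSup_mem hSne hS).2 (hQ hle hw)

lemma le_sInf_not_iff_of_antitone {R : ℕ → Prop} (hR : Antitone R) (hR0 : R 0) {m w i : ℕ}
    (hwm : w ≤ m)
    (hi1 : (∃ j ∈ Icc 1 (m - 1), ¬ R j) → i = sInf {j | j ∈ Icc 1 (m - 1) ∧ ¬ R j})
    (hi2 : (∀ j ∈ Icc 1 (m - 1), R j) → i = m) :
    w ≤ i ↔ R (w - 1) := by
  set S := {j | j ∈ Icc 1 (m - 1) ∧ ¬ R j}
  by_cases hT : ∃ j ∈ Icc 1 (m - 1), ¬ R j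
  · rw [hi1 hT]
    have hmem : sInf S ∈ S := Nat.sInf_mem hT
    constructor
    · intro hle
      by_contra hw
      have hw0 : w - 1 ≠ 0 := by rintro h; exact hw (h ▸ hR0)
      have := Nat.sInf_le (show w - 1 ∈ S from ⟨⟨by omega, by omega⟩, hw⟩)
      omega
    · intro hw
      by_contra! hlt
      exact hmem.2 (hR (by omega) hw)
  · push Not at hT
    rw [hi2 hT]
    simp only [hwm, true_iff]
    rcases Nat.eq_zero_or_pos (w - 1) with h | h
    · exact h ▸ hR0
    · exact hT _ ⟨h, by omega⟩

lemma bijOn_concat_window {m n w : ℕ} (hmn : m ≤ n) (hw1 : 1 ≤ w) (hwm : w ≤ m) :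
    BijOn (fun t => if t ≤ m - 1 then t else n + t - (m - 1)) (Icc w (w + m - 2))
      (Icc w (m - 1) ∪ Icc (n + 1) (w + n - 1)) := by
  refine ⟨fun t ht => ?_, fun a ha b hb h => ?_, fun u hu => ?_⟩
  · simp only [mem_Icc] at ht
    simp only [mem_union, mem_Icc]
    split_ifs <;> omega
  · simp only [mem_Icc] at ha hb
    simp only at h
    split_ifs at h <;> omega
  · rcases hu with hu | hu <;> simp only [mem_Icc] at hu
    · exact ⟨u, by simp only [mem_Icc]; omega, if_pos (by omega)⟩
    · refine ⟨u + m - 1 - n, by simp only [mem_Icc]; omega, ?_⟩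
      simp only
      rw [if_neg (by omega)]
      omega

lemma injOn_concat_window_iff {α : Type*} {x y : ℕ → α} {m n w : ℕ} (hmn : m ≤ n)
    (hw1 : 1 ≤ w) (hwm : w ≤ m)
    (hy : ∀ t, 1 ≤ t → t ≤ 2 * m - 2 → y t = if t ≤ m - 1 then x t else x (n + t - (m - 1))) :
    InjOn y (Icc w (w + m - 2)) ↔ InjOn x (Icc w (m - 1) ∪ Icc (n + 1) (w + n - 1)) := by
  have hφ := bijOn_concat_window hmn hw1 hwm
  have hyx : EqOn y (x ∘ fun t => if t ≤ m - 1 then t else n + t - (m - 1))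
      (Icc w (w + m - 2)) := by
    intro t ht
    simp only [mem_Icc] at ht
    rw [hy t (by omega) (by omega), Function.comp_apply]
    split_ifs <;> rfl
  rw [hyx.injOn_iff, hφ.injOn.comp_iff, hφ.image_eq]

theorem stmt11_general (n m : ℕ) (hmn : m < n) (α : Type*) (x : ℕ → α)
    (hmid : Set.InjOn x (Set.Icc m n))
    (iL iR : ℕ)
    (hiL : iL = sSup {j | j ∈ Set.Icc 1 (m - 1) ∧ ¬ Set.InjOn x (Set.Icc j n)})
    (hiR1 : (∃ j ∈ Set.Icc 1 (m - 1), ¬ Set.InjOn x (Set.Icc m (n + j))) →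
      iR = sInf {j | j ∈ Set.Icc 1 (m - 1) ∧ ¬ Set.InjOn x (Set.Icc m (n + j))})
    (hiR2 : (∀ j ∈ Set.Icc 1 (m - 1), Set.InjOn x (Set.Icc m (n + j))) → iR = m)
    (y : ℕ → α)
    (hy : ∀ t, 1 ≤ t → t ≤ 2 * m - 2 →
      y t = if t ≤ m - 1 then x t else x (n + t - (m - 1))) :
    ∀ w, 1 ≤ w → w ≤ m →
      (Set.InjOn x (Set.Icc w (w + n - 1)) ↔
        (iL < w ∧ w ≤ iR ∧ Set.InjOn y (Set.Icc w (w + m - 2)))) := by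
  intro w hw1 hwm
  have hwindow : Icc w (w + n - 1) = Icc w (m - 1) ∪ Icc m n ∪ Icc (n + 1) (w + n - 1) := by
    ext; simp only [mem_union, mem_Icc]; omega
  have hleft : Icc w (m - 1) ∪ Icc m n = Icc w n := by
    ext; simp only [mem_union, mem_Icc]; omega
  have hright : Icc m n ∪ Icc (n + 1) (w + n - 1) = Icc m (n + (w - 1)) := by
    ext; simp only [mem_union, mem_Icc]; omega
  have hL : Monotone fun j => InjOn x (Icc j n) :=
    fun _ _ h hinj => hinj.mono (Icc_subset_Icc_left h)
  have hR : Antitone fun j => InjOn x (Icc m (n + j)) :=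
    fun _ _ h hinj => hinj.mono (Icc_subset_Icc_right (by omega))
  rw [hwindow, injOn_union_union_iff, hleft, hright]
  subst hiL
  exact and_congr (sSup_not_lt_iff_of_monotone hL hmid hw1 hwm).symm
    (and_congr (le_sInf_not_iff_of_antitone hR (by simpa using hmid) hwm hiR1 hiR2).symm
      (injOn_concat_window_iff hmn.le hw1 hwm hy).symm)

/-- (1-indexed input `x_1,…,x_{n+m-1}`, `1 ≤ m < n`.) Assume the middle segment
`x_m,…,x_n` is all-distinct. With `i_L = max{j ∈ [m-1] : (x_j,…,x_n) has a duplicate}`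
(`0` if none; `sSup ∅ = 0` in `ℕ`), and `i_R = min{j ∈ [m-1] : (x_m,…,x_{n+j}) has a
duplicate}` (`m` if none), and `y` the concatenation `(x_1,…,x_{m-1},x_{n+1},…,x_{n+m-1})`
(1-indexed, length `2m-2`): for each window index `w ∈ [m]`, the window
`(x_w,…,x_{w+n-1})` is all-distinct iff `w > i_L`, `w ≤ i_R`, and the `w`-th length-(m-1)
window `(y_w,…,y_{w+m-2})` of the concatenation is all-distinct. -/
theorem stmt11 (n m : ℕ) (hm : 1 ≤ m) (hmn : m < n) (α : Type*) (x : ℕ → α)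
    (hmid : Set.InjOn x (Set.Icc m n))
    (iL iR : ℕ)
    (hiL : iL = sSup {j | j ∈ Set.Icc 1 (m - 1) ∧ ¬ Set.InjOn x (Set.Icc j n)})
    (hiR1 : (∃ j ∈ Set.Icc 1 (m - 1), ¬ Set.InjOn x (Set.Icc m (n + j))) →
      iR = sInf {j | j ∈ Set.Icc 1 (m - 1) ∧ ¬ Set.InjOn x (Set.Icc m (n + j))})
    (hiR2 : (∀ j ∈ Set.Icc 1 (m - 1), Set.InjOn x (Set.Icc m (n + j))) → iR = m)
    (y : ℕ → α)
    (hy : ∀ t, 1 ≤ t → t ≤ 2 * m - 2 →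
      y t = if t ≤ m - 1 then x t else x (n + t - (m - 1))) :
    ∀ w, 1 ≤ w → w ≤ m →
      (Set.InjOn x (Set.Icc w (w + n - 1)) ↔
        (iL < w ∧ w ≤ iR ∧ Set.InjOn y (Set.Icc w (w + m - 2)))) :=
  stmt11_general n m hmn α x hmid iL iR hiL hiR1 hiR2 y hy
end

section
/- In the multi-source collision-finding algorithm, in which each traversal of a stored cycle splits it into two cycles whose lengths differ by at most 1 (each roughly half), any single edge of the explored graph is traversed at most O(min{k, log n}) times over k iterations. -/
/-! The quantity `L t - 1` at least halves at every traversal, so `2 ^ t * (L t - 1) ≤ L 0 - 1`.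
At the last traversal `t = T - 1` the cycle still has length at least `2`, whence
`2 ^ (T - 1) ≤ n` and `T ≤ log₂ n + 1`. -/

theorem two_pow_mul_sub_one_le {L : ℕ → ℕ} (hhalf : ∀ t, 2 * L (t + 1) ≤ L t + 1) (t : ℕ) :
    2 ^ t * (L t - 1) ≤ L 0 - 1 := by
  induction t with
  | zero => simp
  | succ t ih =>
    calc 2 ^ (t + 1) * (L (t + 1) - 1) = 2 ^ t * (2 * (L (t + 1) - 1)) := by ring
      _ ≤ 2 ^ t * (L t - 1) := Nat.mul_le_mul_left _ (by have := hhalf t; omega)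
      _ ≤ L 0 - 1 := ih

theorem two_pow_le_of_two_le {L : ℕ → ℕ} (hhalf : ∀ t, 2 * L (t + 1) ≤ L t + 1) {t : ℕ}
    (hlen : 2 ≤ L t) : 2 ^ t ≤ L 0 := by
  calc 2 ^ t = 2 ^ t * 1 := (mul_one _).symm
    _ ≤ 2 ^ t * (L t - 1) := Nat.mul_le_mul_left _ (by omega)
    _ ≤ L 0 - 1 := two_pow_mul_sub_one_le hhalf t
    _ ≤ L 0 := Nat.sub_le _ _

theorem stmt19_general (n k T : ℕ) (L : ℕ → ℕ)
    (hL0 : L 0 ≤ n) (hhalf : ∀ t, 2 * L (t + 1) ≤ L t + 1)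
    (hpos : ∀ t < T, 2 ≤ L t) (hTk : T ≤ k) :
    T ≤ min k (Nat.log 2 n + 1) := by
  refine le_min hTk ?_
  cases T with
  | zero => omega
  | succ T =>
    have hpow : 2 ^ T ≤ n := (two_pow_le_of_two_le hhalf (hpos T T.lt_succ_self)).trans hL0
    have := Nat.le_log_of_pow_le one_lt_two hpow
    omega

/-- Each traversal of a stored cycle splits it into two cycles of roughly half the
length. If `L t` is the length of the cycle containing a fixed edge at the time of its
`t`-th traversal, then `L 0 ≤ n`, each traversal at least halves the length (rounding
up: `2·L(t+1) ≤ L t + 1`), traversed cycles have length at least 2, and there are at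
most `k` iterations; hence the edge is traversed at most `min{k, log₂ n + 1}` times. -/
theorem stmt19 (n k T : ℕ) (hn : 1 ≤ n) (L : ℕ → ℕ)
    (hL0 : L 0 ≤ n) (hhalf : ∀ t, 2 * L (t + 1) ≤ L t + 1)
    (hpos : ∀ t < T, 2 ≤ L t) (hTk : T ≤ k) :
    T ≤ min k (Nat.log 2 n + 1) :=
  stmt19_general n k T L hL0 hhalf hpos hTk
end
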